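/- Under the Malthusian hypotheses and assuming m := ∫_ℛ #s ν(ds) < ∞, for the cascade started from x = 1: if L and Q are lines in 𝒰 such that Q covers L and |Q| := sup_{u∈Q} |u| < ∞, then E[M_Q | H_L] = M_L almost surely, where M_Q = ∑_{u∈Q} ξ_u^{p_0}. -/

import Mathlib

open MeasureTheory ProbabilityTheory Filter Real
open scoped ENNReal NNReal Topology

/-- Representation space for finite point measures on `(0,∞)`: a point measure `s`
is identified with the sequence `(s 0, s 1, …)` of its atoms followed by zeros. -/
abbrev PMSeq : Type := ℕ → ℝ

/-- `s` is a genuine representation of a finite point measure: all entries are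
nonnegative and the nonzero entries (the atoms) are exactly those of index `< n`
for some `n`. -/
def IsPointSeq (s : PMSeq) : Prop :=
  (∀ i, 0 ≤ s i) ∧ ∃ n : ℕ, ∀ i, s i ≠ 0 ↔ i < n

/-- The number `#s` of atoms of `s`. -/
noncomputable def numAtoms (s : PMSeq) : ℕ := Nat.card {i : ℕ // s i ≠ 0}

/-- `⟨x^p, s⟩ = ∑_{i=1}^{#s} s_i ^ p`, valued in `[0,∞]`. -/
noncomputable def powSum (p : ℝ) (s : PMSeq) : ℝ≥0∞ :=
  ∑' i : ℕ, if s i = 0 then 0 else ENNReal.ofReal (s i ^ p)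

/-- `Λ(p) = ∫ ⟨x^p, s⟩ ν(ds) ∈ [0,∞]`. -/
noncomputable def Lam (ν : Measure PMSeq) (p : ℝ) : ℝ≥0∞ := ∫⁻ s, powSum p s ∂ν

/-- `κ(p) = 1 - Λ(p)` (junk value when `Λ(p) = ∞`). -/
noncomputable def kappa (ν : Measure PMSeq) (p : ℝ) : ℝ := 1 - (Lam ν p).toReal

/-- `p̲ = inf {p : Λ(p) < ∞}`, as an extended real. -/
noncomputable def pLow (ν : Measure PMSeq) : EReal :=
  sInf {x : EReal | ∃ p : ℝ, x = ↑p ∧ Lam ν p < ⊤}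

/-- `p_∞ = inf {p > p̲ : Λ(p) = ∞}`, as an extended real (`⊤` if no such `p`). -/
noncomputable def pInfty (ν : Measure PMSeq) : EReal :=
  sInf {x : EReal | ∃ p : ℝ, x = ↑p ∧ pLow ν < ↑p ∧ Lam ν p = ⊤}

/-- `p ∈ (p̲, p_∞)`. -/
def InDomain (ν : Measure PMSeq) (p : ℝ) : Prop := pLow ν < ↑p ∧ ↑p < pInfty ν

/-- `p₀` is the Malthusian exponent: the smallest solution of `κ(p) = 0`
(equivalently `Λ(p) = 1`) on `(p̲, p_∞)`. -/
def IsMalthusian (ν : Measure PMSeq) (p₀ : ℝ) : Prop :=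
  InDomain ν p₀ ∧ Lam ν p₀ = 1 ∧ ∀ q : ℝ, InDomain ν q → Lam ν q = 1 → p₀ ≤ q

/-- The Malthusian hypotheses: the Malthusian exponent `p₀` exists, is positive,
`κ(p) > 0` for some `p > p₀`, and `∫ ⟨x^{p₀}, s⟩^p ν(ds) < ∞` for some `p > 1`. -/
def MalthusHyp (ν : Measure PMSeq) (p₀ : ℝ) : Prop :=
  IsMalthusian ν p₀ ∧ 0 < p₀ ∧ (∃ p : ℝ, p₀ < p ∧ InDomain ν p ∧ Lam ν p < 1) ∧
    ∃ p : ℝ, 1 < p ∧ ∫⁻ s, powSum p₀ s ^ p ∂ν < ⊤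
variable {Ω : Type*}

/-- The multiplicative cascade built from the i.i.d. marks `R`: `ξ_∅ = x` and
`ξ_{ui} = R_u(i) · ξ_u`; explicitly `ξ_u = x ∏_{k<|u|} R_{u|k}(u_k)`. -/
noncomputable def xi (R : List ℕ → Ω → ℕ → ℝ) (x : ℝ) (u : List ℕ) (ω : Ω) : ℝ :=
  x * ∏ k ∈ Finset.range u.length, R (u.take k) ω (u.getD k 0)

/-- `M_n^{(p)} = ∑_{|u|=n} ξ_u^p` (summing over individuals of positive size). -/
noncomputable def genSum (R : List ℕ → Ω → ℕ → ℝ) (x p : ℝ) (n : ℕ) (ω : Ω) : ℝ :=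
  ∑' u : {u : List ℕ // u.length = n}, if xi R x u ω = 0 then 0 else xi R x u ω ^ p

/-- The filtration `H_n = σ(R_v : |v| < n)`. -/
noncomputable def cascadeFilt [m0 : MeasurableSpace Ω] (R : List ℕ → Ω → ℕ → ℝ)
    (hR : ∀ u, Measurable (R u)) : Filtration ℕ m0 where
  seq n := ⨆ (v : List ℕ) (_ : v.length < n), MeasurableSpace.comap (R v) inferInstance
  mono' m n hmn := by
    refine iSup₂_le fun v hv => ?_
    exact le_iSup₂ (f := fun (v : List ℕ) (_ : v.length < n) =>
      MeasurableSpace.comap (R v) inferInstance) v (hv.trans_le hmn)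
  le' n := iSup₂_le fun v _ => measurable_iff_comap_le.mp (hR v)


/-- `L` is a line: no element of `L` is a strict prefix of another element. -/
def IsLine (L : Set (List ℕ)) : Prop :=
  ∀ u ∈ L, ∀ v ∈ L, u <+: v → u = v

/-- `L ⪯ Q`: every element of `Q` stems from (has a prefix in) `L`. -/
def LineLE (L Q : Set (List ℕ)) : Prop := ∀ q ∈ Q, ∃ l ∈ L, l <+: q

/-- `Q` covers `L`: `L ⪯ Q` and every node stemming from `L` either stems from
`Q` or has progeny in `Q`. -/
def Covers (L Q : Set (List ℕ)) : Prop :=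
  LineLE L Q ∧ ∀ u : List ℕ, (∃ l ∈ L, l <+: u) →
    (∃ q ∈ Q, q <+: u) ∨ (∃ q ∈ Q, u <+: q)

/-- The pre-`L` sigma-field `H_L`, generated by the reproduction marks of the
strict ancestors of the members of `L` (those marks determine `(ξ_u)_{u ⪯ l, l ∈ L}`). -/
noncomputable def lineSigma [MeasurableSpace Ω] (R : List ℕ → Ω → ℕ → ℝ)
    (L : Set (List ℕ)) : MeasurableSpace Ω :=
  ⨆ (v : List ℕ) (_ : ∃ l ∈ L, v <+: l ∧ v ≠ l),
    MeasurableSpace.comap (R v) inferInstance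

/-- `M_Q = ∑_{u ∈ Q} ξ_u^{p₀}` for the cascade started from `1`. -/
noncomputable def lineSum (R : List ℕ → Ω → ℕ → ℝ) (p₀ : ℝ) (Q : Set (List ℕ))
    (ω : Ω) : ℝ :=
  ∑' u : Q, if xi R 1 u ω = 0 then 0 else xi R 1 (u : List ℕ) ω ^ p₀

/-!
Write `W_u = ξ_u^{p₀}`. Every `u ∈ Q` stems from a unique `l ∈ L`, and the cascade below `l` is
`ξ_l` times an independent copy of the whole cascade, so `M_Q = ∑_{l ∈ L} W_l Y_l`, where `W_l`
is `H_L`-measurable and `Y_l` is the mass of the line `{w | l ++ w ∈ Q}` in a cascade built from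
marks independent of `H_L`. Along a word, expectations multiply: `E W_u = ∏ a(u_k)` with
`a(i) = ∫ s_i^{p₀} dν` and `∑ a(i) = Λ(p₀) = 1`. For such weights every line of bounded length
covering the root has total weight `1` (induction on the length bound, splitting off the first
letter), hence `E Y_l = 1` and `E[M_Q ; S] = E[M_L ; S]` for every `S ∈ H_L`.
-/

open Set

section Words

theorem tsum_eq_tsum_tsum_append {α ι : Type*} {Q : Set (List α)} (c : ι → List α)
    (hc : ∀ i j, c i <+: c j → i = j) (hQ : ∀ u ∈ Q, ∃ i, c i <+: u) (f : List α → ℝ≥0∞) :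
    ∑' u : Q, f u = ∑' i, ∑' w : (c i ++ ·) ⁻¹' Q, f (c i ++ w) := by
  refine Eq.trans ?_ (ENNReal.tsum_sigma' fun x : Σ i, ↥((c i ++ ·) ⁻¹' Q) => f (c x.1 ++ x.2))
  refine (Function.Injective.tsum_eq
    (g := fun x : Σ i, ↥((c i ++ ·) ⁻¹' Q) => (⟨c x.1 ++ x.2, x.2.2⟩ : Q)) ?_ ?_).symm
  · rintro ⟨i, w, hw⟩ ⟨j, w', hw'⟩ h
    have h : c i ++ w = c j ++ w' := congrArg Subtype.val h
    obtain rfl : i = j := by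
      rcases List.prefix_or_prefix_of_prefix (List.prefix_append (c i) w)
        (h ▸ List.prefix_append (c j) w') with hij | hji
      · exact hc i j hij
      · exact (hc j i hji).symm
    exact Sigma.subtype_ext rfl (List.append_cancel_left h)
  · rintro ⟨u, hu⟩ -
    obtain ⟨i, w, rfl⟩ := hQ u hu
    exact ⟨⟨i, w, hu⟩, rfl⟩

theorem IsLine.eq_singleton_nil {D : Set (List ℕ)} (hD : IsLine D) (h : [] ∈ D) : D = {[]} :=
  eq_singleton_iff_unique_mem.mpr ⟨h, fun w hw => (hD [] h w hw w.nil_prefix).symm⟩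

theorem IsLine.preimage_append {D : Set (List ℕ)} (hD : IsLine D) (l : List ℕ) :
    IsLine ((l ++ ·) ⁻¹' D) :=
  fun _ hu _ hv huv =>
    List.append_cancel_left (hD _ hu _ hv ((List.prefix_append_right_inj l).mpr huv))

theorem Covers.preimage_append {L Q : Set (List ℕ)} (hcov : Covers L Q) (hL : IsLine L)
    {l : List ℕ} (hl : l ∈ L) : Covers {[]} ((l ++ ·) ⁻¹' Q) := by
  refine ⟨fun q _ => ⟨[], rfl, q.nil_prefix⟩, fun w _ => ?_⟩
  rcases hcov.2 (l ++ w) ⟨l, hl, List.prefix_append l w⟩ with ⟨q, hq, hqw⟩ | ⟨q, hq, hwq⟩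
  · obtain ⟨l', hl', hl'q⟩ := hcov.1 q hq
    obtain rfl : l' = l := by
      rcases List.prefix_or_prefix_of_prefix (hl'q.trans hqw) (List.prefix_append l w) with h | h
      · exact hL _ hl' _ hl h
      · exact (hL _ hl _ hl' h).symm
    obtain ⟨d, rfl⟩ := hl'q
    exact Or.inl ⟨d, hq, (List.prefix_append_right_inj l').mp hqw⟩
  · obtain ⟨d, rfl⟩ := (List.prefix_append l w).trans hwq
    exact Or.inr ⟨d, hq, (List.prefix_append_right_inj l).mp hwq⟩

theorem Covers.preimage_singleton_append {D : Set (List ℕ)} (hcov : Covers {[]} D) (h0 : [] ∉ D)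
    (i : ℕ) : Covers {[]} (([i] ++ ·) ⁻¹' D) := by
  refine ⟨fun q _ => ⟨[], rfl, q.nil_prefix⟩, fun w _ => ?_⟩
  rcases hcov.2 ([i] ++ w) ⟨[], rfl, List.nil_prefix⟩ with ⟨_ | ⟨j, d⟩, hd, hdw⟩ | ⟨d, hd, hwd⟩
  · exact absurd hd h0
  · obtain ⟨rfl, hdw'⟩ := List.cons_prefix_cons.mp hdw
    exact Or.inl ⟨d, hd, hdw'⟩
  · obtain ⟨t, rfl⟩ := hwd
    exact Or.inr ⟨w ++ t, by simpa using hd, List.prefix_append w t⟩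

variable {a : ℕ → ℝ≥0∞} {D : Set (List ℕ)}

theorem tsum_prod_map_eq_tsum_mul_of_nil_notMem (h0 : [] ∉ D) :
    ∑' w : D, (w.1.map a).prod = ∑' i, a i * ∑' w : ([i] ++ ·) ⁻¹' D, (w.1.map a).prod := by
  rw [tsum_eq_tsum_tsum_append (Q := D) (f := fun w => (w.map a).prod) (fun i : ℕ => [i])
    (fun i j h => by simpa using h.eq_of_length rfl) ?cover]
  · simp only [List.singleton_append, List.map_cons, List.prod_cons, ENNReal.tsum_mul_left]
  case cover =>
    rintro (_ | ⟨j, t⟩) hu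
    · exact absurd hu h0
    · exact ⟨j, List.prefix_append [j] t⟩

theorem tsum_prod_map_eq_one_of_nil_mem (hD : IsLine D) (h0 : [] ∈ D) :
    ∑' w : D, (w.1.map a).prod = 1 := by
  rw [hD.eq_singleton_nil h0, tsum_singleton [] fun w : List ℕ => (w.map a).prod]
  rfl

theorem tsum_prod_map_le_one (ha : ∑' i, a i ≤ 1) {N : ℕ} (hD : IsLine D)
    (hN : ∀ d ∈ D, d.length < N) : ∑' w : D, (w.1.map a).prod ≤ 1 := by
  induction N generalizing D with
  | zero =>
    rw [eq_empty_of_forall_notMem fun d hd => Nat.not_lt_zero _ (hN d hd), tsum_empty]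
    exact zero_le_one
  | succ N ih =>
    by_cases h0 : [] ∈ D
    · exact (tsum_prod_map_eq_one_of_nil_mem hD h0).le
    rw [tsum_prod_map_eq_tsum_mul_of_nil_notMem h0]
    calc ∑' i, a i * ∑' w : ([i] ++ ·) ⁻¹' D, (w.1.map a).prod
        ≤ ∑' i, a i * 1 := by
          gcongr with i
          exact ih (hD.preimage_append [i]) fun d hd => Nat.succ_lt_succ_iff.mp (hN _ hd)
      _ ≤ 1 := by simpa using ha

theorem tsum_prod_map_eq_one (ha : ∑' i, a i = 1) {N : ℕ} (hD : IsLine D) (hcov : Covers {[]} D)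
    (hN : ∀ d ∈ D, d.length < N) : ∑' w : D, (w.1.map a).prod = 1 := by
  induction N generalizing D with
  | zero =>
    obtain ⟨d, hd, -⟩ | ⟨d, hd, -⟩ := hcov.2 [] ⟨[], rfl, List.nil_prefix⟩ <;>
      exact absurd (hN d hd) (Nat.not_lt_zero _)
  | succ N ih =>
    by_cases h0 : [] ∈ D
    · exact tsum_prod_map_eq_one_of_nil_mem hD h0
    rw [tsum_prod_map_eq_tsum_mul_of_nil_notMem h0, ← ha]
    refine tsum_congr fun i => ?_
    rw [ih (hD.preimage_append [i]) (hcov.preimage_singleton_append h0 i)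
      fun d hd => Nat.succ_lt_succ_iff.mp (hN _ hd), mul_one]

end Words

theorem setLIntegral_mul_of_indep {m₁ m₂ m0 : MeasurableSpace Ω} {μ : Measure Ω}
    (h₁ : m₁ ≤ m0) (h₂ : m₂ ≤ m0) (hind : Indep m₁ m₂ μ) {f g : Ω → ℝ≥0∞}
    (hf : Measurable[m₁] f) (hg : Measurable[m₂] g) {s : Set Ω} (hs : MeasurableSet[m₁] s) :
    ∫⁻ x in s, f x * g x ∂μ = (∫⁻ x in s, f x ∂μ) * ∫⁻ x, g x ∂μ := by
  rw [← lintegral_indicator (h₁ s hs), ← lintegral_indicator (h₁ s hs)]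
  simp_rw [Set.indicator_mul_left]
  exact lintegral_mul_eq_lintegral_mul_lintegral_of_independent_measurableSpace h₁ h₂ hind
    (hf.indicator hs) hg

theorem condExp_toReal_ae_eq_of_setLIntegral_eq {m m0 : MeasurableSpace Ω} {μ : Measure Ω}
    [IsFiniteMeasure μ] (hm : m ≤ m0) {f g : Ω → ℝ≥0∞} (hf : Measurable f)
    (hg : Measurable[m] g) (hfin : ∫⁻ x, f x ∂μ ≠ ∞)
    (hfg : ∀ s, MeasurableSet[m] s → ∫⁻ x in s, f x ∂μ = ∫⁻ x in s, g x ∂μ) :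
    μ[fun x => (f x).toReal | m] =ᵐ[μ] fun x => (g x).toReal := by
  have hg' : Measurable g := hg.mono hm le_rfl
  have hgfin : ∫⁻ x, g x ∂μ ≠ ∞ := by
    rwa [← setLIntegral_univ, ← hfg univ MeasurableSet.univ, setLIntegral_univ]
  have : IsFiniteMeasure (μ.trim hm) := isFiniteMeasure_trim hm
  refine (ae_eq_condExp_of_forall_setIntegral_eq hm
    (integrable_toReal_of_lintegral_ne_top hf.aemeasurable hfin)
    (fun s _ _ => (integrable_toReal_of_lintegral_ne_top hg'.aemeasurable hgfin).integrableOn)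
    (fun s hs _ => ?_) hg.ennreal_toReal.aestronglyMeasurable).symm
  rw [integral_toReal hg'.aemeasurable.restrict (ae_restrict_of_ae (ae_lt_top hg' hgfin)),
    integral_toReal hf.aemeasurable.restrict (ae_restrict_of_ae (ae_lt_top hf hfin)), hfg s hs]

section Cascade

-- The summand of `powSum`: `powSum p s = ∑' i, atomWeight p (s i)` holds definitionally.
noncomputable def atomWeight (p x : ℝ) : ℝ≥0∞ := if x = 0 then 0 else ENNReal.ofReal (x ^ p)

theorem measurable_atomWeight (p : ℝ) : Measurable (atomWeight p) :=
  Measurable.ite (measurableSet_singleton 0) measurable_const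
    (ENNReal.measurable_ofReal.comp (measurable_id.pow_const p))

theorem atomWeight_ne_top (p x : ℝ) : atomWeight p x ≠ ∞ := by
  unfold atomWeight; split <;> simp

theorem toReal_atomWeight {p x : ℝ} (hx : 0 ≤ x) :
    (atomWeight p x).toReal = if x = 0 then 0 else x ^ p := by
  unfold atomWeight; split <;> simp [Real.rpow_nonneg hx]

theorem ite_mul_rpow {x y : ℝ} (hx : 0 ≤ x) (hy : 0 ≤ y) (p : ℝ) :
    (if x * y = 0 then 0 else (x * y) ^ p) =
      (if x = 0 then 0 else x ^ p) * (if y = 0 then 0 else y ^ p) := by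
  by_cases hx0 : x = 0
  · simp [hx0]
  by_cases hy0 : y = 0
  · simp [hy0]
  simp [hx0, hy0, Real.mul_rpow hx hy]

variable {R : List ℕ → Ω → ℕ → ℝ} {p : ℝ}

noncomputable def pathWeight (R : List ℕ → Ω → ℕ → ℝ) (p : ℝ) : List ℕ → Ω → ℝ≥0∞
  | [], _ => 1
  | i :: w, ω => atomWeight p (R [] ω i) * pathWeight (fun v => R (i :: v)) p w ω

theorem pathWeight_append (l w : List ℕ) (ω : Ω) :
    pathWeight R p (l ++ w) ω = pathWeight R p l ω * pathWeight (fun v => R (l ++ v)) p w ω := by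
  induction l generalizing R with
  | nil => exact (one_mul _).symm
  | cons i l ih => simp only [List.cons_append, pathWeight, ih, mul_assoc]

theorem pathWeight_ne_top (u : List ℕ) (ω : Ω) : pathWeight R p u ω ≠ ∞ := by
  induction u generalizing R with
  | nil => exact ENNReal.one_ne_top
  | cons i w ih => exact ENNReal.mul_ne_top (atomWeight_ne_top _ _) ih

theorem measurable_pathWeight {m : MeasurableSpace Ω} {w : List ℕ}
    (h : ∀ v, v <+: w → v ≠ w → Measurable[m] (R v)) : Measurable[m] (pathWeight R p w) := by
  induction w generalizing R with
  | nil => exact measurable_const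
  | cons i w ih =>
    refine ((measurable_atomWeight p).comp ((measurable_pi_apply i).comp ?_)).mul
      (ih fun v hv hne => h (i :: v) (List.cons_prefix_cons.mpr ⟨rfl, hv⟩) (by simpa using hne))
    exact h [] List.nil_prefix (List.cons_ne_nil i w).symm

theorem measurable_pathWeight_of_measurable [MeasurableSpace Ω] (hRmeas : ∀ v, Measurable (R v))
    (u : List ℕ) :
    Measurable (pathWeight R p u) :=
  measurable_pathWeight fun v _ _ => hRmeas v

theorem xi_cons (i : ℕ) (w : List ℕ) (ω : Ω) :
    xi R 1 (i :: w) ω = R [] ω i * xi (fun v => R (i :: v)) 1 w ω := by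
  simp [xi, Finset.prod_range_succ', mul_comm]

theorem xi_nonneg {ω : Ω} (hR : ∀ v j, 0 ≤ R v ω j) (u : List ℕ) : 0 ≤ xi R 1 u ω := by
  unfold xi
  exact mul_nonneg zero_le_one (Finset.prod_nonneg fun _ _ => hR _ _)

theorem toReal_pathWeight {ω : Ω} (hR : ∀ v j, 0 ≤ R v ω j) (u : List ℕ) :
    (pathWeight R p u ω).toReal = if xi R 1 u ω = 0 then 0 else xi R 1 u ω ^ p := by
  induction u generalizing R with
  | nil => simp [pathWeight, xi]
  | cons i w ih =>
    rw [pathWeight, ENNReal.toReal_mul, xi_cons,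
      ite_mul_rpow (hR [] i) (xi_nonneg (fun v j => hR _ j) w), toReal_atomWeight (hR [] i),
      ih fun v j => hR _ j]

noncomputable def lineMass (R : List ℕ → Ω → ℕ → ℝ) (p : ℝ) (T : Set (List ℕ)) (ω : Ω) :
    ℝ≥0∞ :=
  ∑' u : T, pathWeight R p u ω

theorem measurable_lineMass {m : MeasurableSpace Ω} {T : Set (List ℕ)}
    (h : ∀ u ∈ T, Measurable[m] (pathWeight R p u)) : Measurable[m] (lineMass R p T) :=
  Measurable.tsum fun u => h u u.2

theorem measurable_lineMass_of_measurable [MeasurableSpace Ω] (hRmeas : ∀ v, Measurable (R v))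
    (T : Set (List ℕ)) :
    Measurable (lineMass R p T) :=
  measurable_lineMass fun u _ => measurable_pathWeight_of_measurable hRmeas u

theorem lineSum_eq_toReal_lineMass {ω : Ω} (hR : ∀ v j, 0 ≤ R v ω j) (T : Set (List ℕ)) :
    lineSum R p T ω = (lineMass R p T ω).toReal := by
  rw [lineSum, lineMass, ENNReal.tsum_toReal_eq fun u => pathWeight_ne_top _ ω]
  exact tsum_congr fun u => (toReal_pathWeight hR u).symm

theorem lineMass_eq_tsum_mul {L Q : Set (List ℕ)} (hL : IsLine L) (hLQ : LineLE L Q) (ω : Ω) :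
    lineMass R p Q ω =
      ∑' l : L, pathWeight R p l ω * lineMass (fun v => R (l ++ v)) p ((l ++ ·) ⁻¹' Q) ω := by
  rw [lineMass, tsum_eq_tsum_tsum_append (f := fun u => pathWeight R p u ω) Subtype.val
    (fun l l' h => Subtype.ext (hL _ l.2 _ l'.2 h))
    fun u hu => let ⟨l, hl, hlu⟩ := hLQ u hu; ⟨⟨l, hl⟩, hlu⟩]
  simp only [pathWeight_append, lineMass, ENNReal.tsum_mul_left]

end Cascade

section Marks

variable {R : List ℕ → Ω → ℕ → ℝ}

abbrev marksSigma (R : List ℕ → Ω → ℕ → ℝ) (S : Set (List ℕ)) : MeasurableSpace Ω :=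
  ⨆ v ∈ S, MeasurableSpace.comap (R v) inferInstance

def strictAncestors (L : Set (List ℕ)) : Set (List ℕ) := {v | ∃ l ∈ L, v <+: l ∧ v ≠ l}

theorem measurable_marksSigma {S : Set (List ℕ)} {v : List ℕ} (hv : v ∈ S) :
    Measurable[marksSigma R S] (R v) :=
  Measurable.of_comap_le (le_iSup₂ (f := fun v (_ : v ∈ S) =>
    MeasurableSpace.comap (R v) (inferInstance : MeasurableSpace (ℕ → ℝ))) v hv)

theorem IsLine.append_notMem_strictAncestors {L : Set (List ℕ)} (hL : IsLine L) {l : List ℕ}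
    (hl : l ∈ L) (v : List ℕ) : l ++ v ∉ strictAncestors L := by
  rintro ⟨l', hl', hpre, hne⟩
  have hl'l : l <+: l' := (List.prefix_append l v).trans hpre
  obtain rfl := hL l hl l' hl' hl'l
  exact hne (hpre.eq_of_length (hpre.length_le.antisymm (List.prefix_append l v).length_le))

variable [m0 : MeasurableSpace Ω] {P : Measure Ω}

theorem marksSigma_le (hRmeas : ∀ v, Measurable (R v)) (S : Set (List ℕ)) :
    marksSigma R S ≤ m0 :=
  iSup₂_le fun v _ => (hRmeas v).comap_le

theorem indep_marksSigma_compl (hRmeas : ∀ v, Measurable (R v)) (hRindep : iIndepFun R P)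
    (S : Set (List ℕ)) : Indep (marksSigma R S) (marksSigma R Sᶜ) P :=
  indep_biSup_compl (fun v => (hRmeas v).comap_le) hRindep.iIndep S

end Marks

section Expectation

variable [MeasurableSpace Ω] {P : Measure Ω} [IsProbabilityMeasure P] {ν : Measure PMSeq}
  {R : List ℕ → Ω → ℕ → ℝ} {p : ℝ}

noncomputable def meanAtomWeight (ν : Measure PMSeq) (p : ℝ) (i : ℕ) : ℝ≥0∞ :=
  ∫⁻ s, atomWeight p (s i) ∂ν

theorem tsum_meanAtomWeight : ∑' i, meanAtomWeight ν p i = Lam ν p :=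
  (lintegral_tsum fun i =>
    ((measurable_atomWeight p).comp (measurable_pi_apply i)).aemeasurable).symm

theorem lintegral_pathWeight (hRmeas : ∀ v, Measurable (R v)) (hRindep : iIndepFun R P)
    (hRdist : ∀ v, Measure.map (R v) P = ν) (u : List ℕ) :
    ∫⁻ ω, pathWeight R p u ω ∂P = (u.map (meanAtomWeight ν p)).prod := by
  induction u generalizing R with
  | nil => simp [pathWeight]
  | cons i w ih =>
    have hind := (indep_marksSigma_compl hRmeas hRindep {v | v ≠ []}).symm
    have hatom : ∫⁻ ω, atomWeight p (R [] ω i) ∂P = meanAtomWeight ν p i := by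
      rw [meanAtomWeight, ← hRdist [], lintegral_map (f := fun s : PMSeq => atomWeight p (s i))
        ((measurable_atomWeight p).comp (measurable_pi_apply i)) (hRmeas [])]
    rw [List.map_cons, List.prod_cons, ← hatom,
      ← ih (fun v => hRmeas _) (hRindep.precomp (List.cons_injective)) fun v => hRdist _]
    exact lintegral_mul_eq_lintegral_mul_lintegral_of_independent_measurableSpace
      (marksSigma_le hRmeas _) (marksSigma_le hRmeas _) hind
      ((measurable_atomWeight p).comp ((measurable_pi_apply i).comp
        (measurable_marksSigma (by simp))))
      (measurable_pathWeight fun v _ _ => measurable_marksSigma (List.cons_ne_nil i v))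

theorem lintegral_lineMass (hRmeas : ∀ v, Measurable (R v)) (hRindep : iIndepFun R P)
    (hRdist : ∀ v, Measure.map (R v) P = ν) (T : Set (List ℕ)) :
    ∫⁻ ω, lineMass R p T ω ∂P = ∑' u : T, (u.1.map (meanAtomWeight ν p)).prod := by
  rw [← tsum_congr fun u : T => lintegral_pathWeight hRmeas hRindep hRdist u.1]
  exact lintegral_tsum fun u => (measurable_pathWeight_of_measurable hRmeas u.1).aemeasurable

theorem lintegral_lineMass_le_one (hRmeas : ∀ v, Measurable (R v)) (hRindep : iIndepFun R P)
    (hRdist : ∀ v, Measure.map (R v) P = ν)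
    (hLam : Lam ν p ≤ 1) {T : Set (List ℕ)} (hT : IsLine T)
    {N : ℕ} (hN : ∀ u ∈ T, u.length < N) : ∫⁻ ω, lineMass R p T ω ∂P ≤ 1 := by
  rw [lintegral_lineMass hRmeas hRindep hRdist]
  exact tsum_prod_map_le_one (tsum_meanAtomWeight.trans_le hLam) hT hN

theorem lintegral_lineMass_eq_one (hRmeas : ∀ v, Measurable (R v)) (hRindep : iIndepFun R P)
    (hRdist : ∀ v, Measure.map (R v) P = ν)
    (hLam : Lam ν p = 1) {T : Set (List ℕ)} (hT : IsLine T)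
    (hcov : Covers {[]} T) {N : ℕ} (hN : ∀ u ∈ T, u.length < N) :
    ∫⁻ ω, lineMass R p T ω ∂P = 1 := by
  rw [lintegral_lineMass hRmeas hRindep hRdist]
  exact tsum_prod_map_eq_one (tsum_meanAtomWeight.trans hLam) hT hcov hN

end Expectation

section Lines

variable {R : List ℕ → Ω → ℕ → ℝ} {p : ℝ} {L Q : Set (List ℕ)}

theorem measurable_lineMass_append (hL : IsLine L) {l : List ℕ} (hl : l ∈ L)
    (D : Set (List ℕ)) :
    Measurable[marksSigma R (strictAncestors L)ᶜ] (lineMass (fun v => R (l ++ v)) p D) :=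
  measurable_lineMass fun _ _ => measurable_pathWeight fun v _ _ =>
    measurable_marksSigma (hL.append_notMem_strictAncestors hl v)

variable [MeasurableSpace Ω] {P : Measure Ω} [IsProbabilityMeasure P] {ν : Measure PMSeq}

theorem measurable_pathWeight_lineSigma {l : List ℕ} (hl : l ∈ L) :
    Measurable[lineSigma R L] (pathWeight R p l) :=
  measurable_pathWeight fun _ hv hne => measurable_marksSigma ⟨l, hl, hv, hne⟩

theorem setLIntegral_lineMass_eq (hRmeas : ∀ v, Measurable (R v)) (hRindep : iIndepFun R P)
    (hRdist : ∀ v, Measure.map (R v) P = ν) (hLam : Lam ν p = 1) (hL : IsLine L)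
    (hQ : IsLine Q) (hcov : Covers L Q) {N : ℕ} (hN : ∀ u ∈ Q, u.length < N) {S : Set Ω}
    (hS : MeasurableSet[lineSigma R L] S) :
    ∫⁻ ω in S, lineMass R p Q ω ∂P = ∫⁻ ω in S, lineMass R p L ω ∂P := by
  have hY : ∀ l ∈ L, ∫⁻ ω, lineMass (fun v => R (l ++ v)) p ((l ++ ·) ⁻¹' Q) ω ∂P = 1 :=
    fun l hl => lintegral_lineMass_eq_one (fun _ => hRmeas _)
      (hRindep.precomp (List.append_right_injective l)) (fun _ => hRdist _) hLam
      (hQ.preimage_append l) (hcov.preimage_append hL hl)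
      fun w hw => (Nat.le_add_left _ _).trans_lt (by simpa using hN _ hw)
  calc ∫⁻ ω in S, lineMass R p Q ω ∂P
      = ∫⁻ ω in S, ∑' l : L,
          pathWeight R p l ω * lineMass (fun v => R (l ++ v)) p ((l ++ ·) ⁻¹' Q) ω ∂P := by
        simp_rw [lineMass_eq_tsum_mul (R := R) (p := p) hL hcov.1]
    _ = ∑' l : L, ∫⁻ ω in S,
          pathWeight R p l ω * lineMass (fun v => R (l ++ v)) p ((l ++ ·) ⁻¹' Q) ω ∂P :=
        lintegral_tsum fun l => ((measurable_pathWeight_of_measurable hRmeas l).mul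
          (measurable_lineMass_of_measurable (fun _ => hRmeas _) _)).aemeasurable
    _ = ∑' l : L, ∫⁻ ω in S, pathWeight R p l ω ∂P := tsum_congr fun l => by
        rw [setLIntegral_mul_of_indep (marksSigma_le hRmeas _) (marksSigma_le hRmeas _)
          (indep_marksSigma_compl hRmeas hRindep _) (measurable_pathWeight_lineSigma l.2)
          (measurable_lineMass_append hL l.2 _) hS, hY l l.2, mul_one]
    _ = ∫⁻ ω in S, lineMass R p L ω ∂P :=
        (lintegral_tsum fun l : L =>
          (measurable_pathWeight_of_measurable hRmeas l.1).aemeasurable).symm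

end Lines

theorem ae_marks_nonneg [MeasurableSpace Ω] {P : Measure Ω} {ν : Measure PMSeq}
    (hν : ∀ᵐ s ∂ν, IsPointSeq s) {R : List ℕ → Ω → ℕ → ℝ} (hRmeas : ∀ v, Measurable (R v))
    (hRdist : ∀ v, Measure.map (R v) P = ν) : ∀ᵐ ω ∂P, ∀ v i, 0 ≤ R v ω i := by
  rw [ae_all_iff]
  intro v
  have h : ∀ᵐ s ∂(P.map (R v)), ∀ i, 0 ≤ s i := by
    rw [hRdist v]
    filter_upwards [hν] with s hs using hs.1
  exact ae_of_ae_map (hRmeas v).aemeasurable h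

theorem stmt14_general {Ω : Type*} [MeasurableSpace Ω] (P : Measure Ω) [IsProbabilityMeasure P]
    (ν : Measure PMSeq) (hν : ∀ᵐ s ∂ν, IsPointSeq s)
    (R : List ℕ → Ω → ℕ → ℝ) (hRmeas : ∀ u, Measurable (R u))
    (hRindep : iIndepFun R P)
    (hRdist : ∀ u, Measure.map (R u) P = ν)
    (p₀ : ℝ) (hmal : MalthusHyp ν p₀)
    (L Q : Set (List ℕ)) (hL : IsLine L) (hQ : IsLine Q)
    (hcov : Covers L Q) (hfin : ∃ N : ℕ, ∀ u ∈ Q, u.length ≤ N) :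
    P[lineSum R p₀ Q | lineSigma R L] =ᵐ[P] lineSum R p₀ L := by
  obtain ⟨N, hN⟩ := hfin
  have hNQ : ∀ u ∈ Q, u.length < N + 1 := fun u hu => Nat.lt_succ_of_le (hN u hu)
  have hLam : Lam ν p₀ = 1 := hmal.1.2.1
  have hmass (T : Set (List ℕ)) : lineSum R p₀ T =ᵐ[P] fun ω => (lineMass R p₀ T ω).toReal := by
    filter_upwards [ae_marks_nonneg hν hRmeas hRdist] with ω hω
    exact lineSum_eq_toReal_lineMass hω T
  have hQfin : ∫⁻ ω, lineMass R p₀ Q ω ∂P ≠ ∞ :=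
    ((lintegral_lineMass_le_one hRmeas hRindep hRdist hLam.le hQ hNQ).trans_lt
      ENNReal.one_lt_top).ne
  calc P[lineSum R p₀ Q | lineSigma R L]
      =ᵐ[P] P[fun ω => (lineMass R p₀ Q ω).toReal | lineSigma R L] := condExp_congr_ae (hmass Q)
    _ =ᵐ[P] fun ω => (lineMass R p₀ L ω).toReal :=
      condExp_toReal_ae_eq_of_setLIntegral_eq (marksSigma_le hRmeas _)
        (measurable_lineMass_of_measurable hRmeas Q)
        (measurable_lineMass fun _ hl => measurable_pathWeight_lineSigma hl) hQfin
        fun S hS => setLIntegral_lineMass_eq hRmeas hRindep hRdist hLam hL hQ hcov hNQ hS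
    _ =ᵐ[P] lineSum R p₀ L := (hmass L).symm

/-- Under the Malthusian hypotheses and `m = ∫ #s ν(ds) < ∞`,
if the line `Q` covers the line `L` and has finite maximal generation, then
`E[M_Q | H_L] = M_L` almost surely. -/
theorem stmt14 {Ω : Type*} [MeasurableSpace Ω] (P : Measure Ω) [IsProbabilityMeasure P]
    (ν : Measure PMSeq) [IsProbabilityMeasure ν] (hν : ∀ᵐ s ∂ν, IsPointSeq s)
    (R : List ℕ → Ω → ℕ → ℝ) (hRmeas : ∀ u, Measurable (R u))
    (hRindep : iIndepFun R P)
    (hRdist : ∀ u, Measure.map (R u) P = ν)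
    (p₀ : ℝ) (hmal : MalthusHyp ν p₀)
    (hm : ∫⁻ s, (numAtoms s : ℝ≥0∞) ∂ν < ⊤)
    (L Q : Set (List ℕ)) (hL : IsLine L) (hQ : IsLine Q)
    (hcov : Covers L Q) (hfin : ∃ N : ℕ, ∀ u ∈ Q, u.length ≤ N) :
    P[lineSum R p₀ Q | lineSigma R L] =ᵐ[P] lineSum R p₀ L :=
  stmt14_general P ν hν R hRmeas hRindep hRdist p₀ hmal L Q hL hQ hcov hfin
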